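/- For every graph G and k ∈ ℕ, G has a lenient tree decomposition of width at most k if and only if there exists a tree T such that G is a minor of the lexicographic product T · K_k. -/

import Mathlib

/-!
Given a lenient tree decomposition `(T, χ)` of width at most `k`, number the vertices of each
bag `χ t` injectively by `Fin k` and let the branch set of `v` be the copies `(t, label of v in t)`
over the bags containing `v`: it is connected because it is a copy of the subtree of those bags,
and an edge `uv` covered by two close bags becomes an edge of `T · K_k` between the branch sets.
Conversely, a model `μ` of `G` in `T · K_k` projects to `T`: the bag of `t` collects the vertices
whose branch set meets the fibre `{t} × K_k`, and since branch sets are disjoint a bag has at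
most `k` elements.
-/

open SimpleGraph

section Defs

variable {V W : Type}

/-- `X` covers the family `B`: every member of `B` meets `X`. -/
def Covers (X : Set V) (B : Set (Set V)) : Prop := ∀ S ∈ B, (S ∩ X).Nonempty

/-- A strict bramble: a family of connected vertex sets, pairwise intersecting. -/
def IsStrictBramble (G : SimpleGraph V) (B : Set (Set V)) : Prop :=
  (∀ S ∈ B, (G.induce S).Connected) ∧ ∀ S ∈ B, ∀ S' ∈ B, (S ∩ S').Nonempty

/-- Two vertex sets touch: they intersect or are joined by an edge. -/
def Touches (G : SimpleGraph V) (S S' : Set V) : Prop :=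
  (S ∩ S').Nonempty ∨ ∃ u ∈ S, ∃ v ∈ S', G.Adj u v

/-- A bramble: a family of connected vertex sets, pairwise touching. -/
def IsBramble (G : SimpleGraph V) (B : Set (Set V)) : Prop :=
  (∀ S ∈ B, (G.induce S).Connected) ∧ ∀ S ∈ B, ∀ S' ∈ B, Touches G S S'

/-- The order of a family of vertex sets: minimum size of a covering set. -/
noncomputable def brOrder (B : Set (Set V)) : ℕ :=
  sInf {n | ∃ X : Set V, Covers X B ∧ X.ncard = n}

/-- The strict bramble number. -/
noncomputable def sbn (G : SimpleGraph V) : ℕ :=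
  sSup {n | ∃ B, IsStrictBramble G B ∧ brOrder B = n}

/-- The bramble number. -/
noncomputable def bn (G : SimpleGraph V) : ℕ :=
  sSup {n | ∃ B, IsBramble G B ∧ brOrder B = n}

/-- `S` is an `(x,y)`-separator: `x, y ∉ S` and `x, y` lie in different
components of `G − S`. -/
def SepPair (G : SimpleGraph V) (x y : V) (S : Set V) : Prop :=
  x ∉ S ∧ y ∉ S ∧ ∀ (hx : x ∈ Sᶜ) (hy : y ∈ Sᶜ),
    ¬ (G.induce Sᶜ).Reachable ⟨x, hx⟩ ⟨y, hy⟩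

/-- `S` is an `(X,Y)`-separator of `G`. -/
def IsSetSeparator (G : SimpleGraph V) (X Y S : Set V) : Prop :=
  ∀ x ∈ X \ S, ∀ y ∈ Y \ S, SepPair G x y S

/-- A lenient tree decomposition of `G`. -/
structure LenientTD (G : SimpleGraph V) where
  ι : Type
  T : SimpleGraph ι
  tree : T.IsTree
  χ : ι → Set V
  covers : ∀ v : V, ∃ t, v ∈ χ t
  edge_mem : ∀ u v : V, G.Adj u v →
    ∃ t t', (t = t' ∨ T.Adj t t') ∧ u ∈ χ t ∪ χ t' ∧ v ∈ χ t ∪ χ t'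
  trace_conn : ∀ v : V, (T.induce {t | v ∈ χ t}).Connected

/-- The width of a lenient tree decomposition is at most `k`. -/
def LenientTD.WidthLE {G : SimpleGraph V} (D : LenientTD G) (k : ℕ) : Prop :=
  ∀ t, (D.χ t).ncard ≤ k

/-- An ordinary tree decomposition of `G`. -/
structure TreeDecomp (G : SimpleGraph V) where
  ι : Type
  T : SimpleGraph ι
  tree : T.IsTree
  χ : ι → Set V
  covers : ∀ v : V, ∃ t, v ∈ χ t
  edge_mem : ∀ u v : V, G.Adj u v → ∃ t, u ∈ χ t ∧ v ∈ χ t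
  trace_conn : ∀ v : V, (T.induce {t | v ∈ χ t}).Connected

/-- Treewidth: minimum over tree decompositions of (max bag size − 1). -/
noncomputable def tw (G : SimpleGraph V) : ℕ :=
  sInf {k | ∃ D : TreeDecomp G, ∀ t, (D.χ t).ncard ≤ k + 1}

/-- A minor model of `H` in `G`. -/
def IsMinorModel (H : SimpleGraph W) (G : SimpleGraph V) (μ : W → Set V) : Prop :=
  (∀ w, (G.induce (μ w)).Connected) ∧
  (∀ w w', w ≠ w' → μ w ∩ μ w' = ∅) ∧
  (∀ w w', H.Adj w w' → ∃ u ∈ μ w, ∃ v ∈ μ w', G.Adj u v)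

/-- `H` is a minor of `G`. -/
def IsMinorOf (H : SimpleGraph W) (G : SimpleGraph V) : Prop :=
  ∃ μ : W → Set V, IsMinorModel H G μ

/-- The lexicographic product `T · K_k`. -/
def lexK {ι : Type} (T : SimpleGraph ι) (k : ℕ) : SimpleGraph (ι × Fin k) where
  Adj a b := T.Adj a.1 b.1 ∨ (a.1 = b.1 ∧ a.2 ≠ b.2)
  symm := ⟨by
    rintro a b (h | ⟨h1, h2⟩)
    · exact Or.inl h.symm
    · exact Or.inr ⟨h1.symm, h2.symm⟩⟩
  loopless := ⟨by
    rintro a (h | ⟨_, h2⟩)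
    · exact T.loopless.irrefl _ h
    · exact h2 rfl⟩

/-- The lexicographic tree product number. -/
noncomputable def ltp (G : SimpleGraph V) : ℕ :=
  sInf {m | ∃ (ι : Type) (T : SimpleGraph ι), T.IsTree ∧ IsMinorOf G (lexK T m)}

/-- The `(T,χ)`-completion of `G`: make each union of two close bags a clique. -/
def LenientTD.completion {G : SimpleGraph V} (D : LenientTD G) : SimpleGraph V where
  Adj u v := u ≠ v ∧ ∃ t t', (t = t' ∨ D.T.Adj t t') ∧
    u ∈ D.χ t ∪ D.χ t' ∧ v ∈ D.χ t ∪ D.χ t'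
  symm := ⟨by
    rintro u v ⟨hne, t, t', hc, hu, hv⟩
    exact ⟨hne.symm, t, t', hc, hv, hu⟩⟩
  loopless := ⟨fun u h => h.1 rfl⟩

/-- `G` is chordal: every cycle of length at least four has a chord. -/
def IsChordal (G : SimpleGraph V) : Prop :=
  ∀ (v : V) (w : G.Walk v v), w.IsCycle → 4 ≤ w.length →
    ∃ x ∈ w.support, ∃ y ∈ w.support, G.Adj x y ∧ s(x, y) ∉ w.edges

end Defs

namespace SimpleGraph

variable {A B : Type*} {G : SimpleGraph A} {H : SimpleGraph B}

theorem Reachable.of_forall_adj_reachable {f : A → B}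
    (hf : ∀ a a', G.Adj a a' → H.Reachable (f a) (f a')) {a a' : A} (h : G.Reachable a a') :
    H.Reachable (f a) (f a') := by
  rw [reachable_eq_reflTransGen] at h hf ⊢
  exact Relation.ReflTransGen.lift' f hf _ _ h

theorem Connected.of_surjective_of_forall_adj_reachable {f : A → B} (hG : G.Connected)
    (hsurj : Function.Surjective f) (hf : ∀ a a', G.Adj a a' → H.Reachable (f a) (f a')) :
    H.Connected where
  preconnected b b' := by
    obtain ⟨a, rfl⟩ := hsurj b
    obtain ⟨a', rfl⟩ := hsurj b'
    exact (hG a a').of_forall_adj_reachable hf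
  nonempty := hG.nonempty.map f

end SimpleGraph

namespace LenientTD

variable {V : Type} {G : SimpleGraph V}

theorem exists_close_of_adj (D : LenientTD G) {u v : V} (huv : G.Adj u v) :
    ∃ s s', (s = s' ∨ D.T.Adj s s') ∧ u ∈ D.χ s ∧ v ∈ D.χ s' := by
  obtain ⟨t, t', hc, hu, hv⟩ := D.edge_mem u v huv
  rcases hu with hu | hu <;> rcases hv with hv | hv
  · exact ⟨t, t, .inl rfl, hu, hv⟩
  · exact ⟨t, t', hc, hu, hv⟩
  · exact ⟨t', t, hc.imp Eq.symm Adj.symm, hu, hv⟩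
  · exact ⟨t', t', .inl rfl, hu, hv⟩

theorem exists_injOn_labelling [Finite V] {D : LenientTD G} {k : ℕ} (hD : D.WidthLE k) :
    ∃ g : D.ι → V → Fin k, ∀ t, (D.χ t).InjOn (g t) := by
  rcases isEmpty_or_nonempty V with _ | ⟨⟨v⟩⟩
  · exact ⟨fun _ => isEmptyElim, fun _ a => isEmptyElim a⟩
  obtain ⟨t, hvt⟩ := D.covers v
  have : NeZero k := ⟨((Set.ncard_pos (Set.toFinite _)).2 ⟨v, hvt⟩ |>.trans_le (hD t)).ne'⟩
  choose g _ hg using fun t => (Set.toFinite (D.χ t)).exists_injOn_of_encard_le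
    (β := Fin k) (t := Set.univ) (by
      rw [Set.encard_univ, ENat.card_eq_coe_fintype_card, Fintype.card_fin,
        ← (Set.toFinite _).cast_ncard_eq]
      exact_mod_cast hD t)
  exact ⟨g, hg⟩

def lexKModel (D : LenientTD G) {k : ℕ} (g : D.ι → V → Fin k) (v : V) : Set (D.ι × Fin k) :=
  {p | v ∈ D.χ p.1 ∧ p.2 = g p.1 v}

theorem isMinorModel_lexKModel (D : LenientTD G) {k : ℕ} {g : D.ι → V → Fin k}
    (hg : ∀ t, (D.χ t).InjOn (g t)) : IsMinorModel G (lexK D.T k) (D.lexKModel g) := by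
  refine ⟨fun v => ?_, fun v w hvw => ?_, fun u v huv => ?_⟩
  · let f (t : {t | v ∈ D.χ t}) : D.lexKModel g v := ⟨(t.1, g t.1 v), t.2, rfl⟩
    refine (D.trace_conn v).of_surjective_of_forall_adj_reachable (f := f) ?_ ?_
    · rintro ⟨⟨t, i⟩, ht, hi⟩
      exact ⟨⟨t, ht⟩, Subtype.ext (Prod.ext rfl hi.symm)⟩
    · exact fun _ _ hab => Adj.reachable (G := (lexK D.T k).induce _) (Or.inl hab)
  · refine Set.eq_empty_iff_forall_notMem.2 ?_
    rintro ⟨t, i⟩ ⟨⟨hv, hi⟩, hw, hi'⟩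
    exact hvw (hg t hv hw (hi.symm.trans hi'))
  · obtain ⟨s, s', hc, hu, hv⟩ := D.exists_close_of_adj huv
    refine ⟨(s, g s u), ⟨hu, rfl⟩, (s', g s' v), ⟨hv, rfl⟩, ?_⟩
    rcases hc with rfl | hadj
    · exact Or.inr ⟨rfl, fun h => huv.ne (hg s hu hv h)⟩
    · exact Or.inl hadj

variable {ι : Type} {T : SimpleGraph ι} {k : ℕ} {μ : V → Set (ι × Fin k)}

def ofLexKModel (hT : T.IsTree) (hμ : IsMinorModel G (lexK T k) μ) : LenientTD G where
  ι := ι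
  T := T
  tree := hT
  χ t := {v | ∃ i, (t, i) ∈ μ v}
  covers v := by
    obtain ⟨⟨p, hp⟩⟩ := (hμ.1 v).nonempty
    exact ⟨p.1, p.2, hp⟩
  edge_mem u v huv := by
    obtain ⟨p, hp, q, hq, hpq⟩ := hμ.2.2 u v huv
    exact ⟨p.1, q.1, (Or.symm hpq).imp And.left id, .inl ⟨p.2, hp⟩, .inr ⟨q.2, hq⟩⟩
  trace_conn v := by
    let f (p : μ v) : {t | ∃ i, (t, i) ∈ μ v} := ⟨p.1.1, p.1.2, p.2⟩
    refine (hμ.1 v).of_surjective_of_forall_adj_reachable (f := f)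
      (fun ⟨t, i, hi⟩ => ⟨⟨(t, i), hi⟩, rfl⟩) ?_
    rintro p q (hpq | ⟨hpq, -⟩)
    · exact Adj.reachable (G := T.induce _) hpq
    · exact (Subtype.ext hpq : f p = f q) ▸ .rfl

theorem widthLE_ofLexKModel (hT : T.IsTree) (hμ : IsMinorModel G (lexK T k) μ) :
    (ofLexKModel hT hμ).WidthLE k := fun t => by
  have hinj : Function.Injective fun v : {v | ∃ i, (t, i) ∈ μ v} => v.2.choose := by
    intro v w hvw
    by_contra hne
    refine Set.eq_empty_iff_forall_notMem.1 (hμ.2.1 v w fun h => hne (Subtype.ext h))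
      (t, v.2.choose) ⟨v.2.choose_spec, ?_⟩
    exact (congrArg (fun i => (t, i) ∈ μ w) hvw).mpr w.2.choose_spec
  show {v | ∃ i, (t, i) ∈ μ v}.ncard ≤ k
  simpa [Nat.card_coe_set_eq] using Nat.card_le_card_of_injective _ hinj

end LenientTD

/-- `G` has a lenient tree decomposition of width at most `k` iff
`G` is a minor of `T · K_k` for some tree `T`. -/
theorem lenientTD_iff_minor_lexK {V : Type} [Fintype V] (G : SimpleGraph V)
    (k : ℕ) :
    (∃ D : LenientTD G, D.WidthLE k) ↔
      ∃ (ι : Type) (T : SimpleGraph ι), T.IsTree ∧ IsMinorOf G (lexK T k) := by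
  constructor
  · rintro ⟨D, hD⟩
    obtain ⟨g, hg⟩ := LenientTD.exists_injOn_labelling hD
    exact ⟨D.ι, D.T, D.tree, _, D.isMinorModel_lexKModel hg⟩
  · rintro ⟨ι, T, hT, μ, hμ⟩
    exact ⟨.ofLexKModel hT hμ, LenientTD.widthLE_ofLexKModel hT hμ⟩
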